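/- In a (k,r)-critical digraph, every edge has a witness: for every pair of vertices u, v with Adj u v, there exists a vertex w (a common parent) such that Adj w u and Adj w v both hold. -/

import Mathlib

/-- A nonempty list of pairwise distinct vertices forms a directed cycle:
consecutive vertices are adjacent and the last vertex is adjacent to the first.
Lists of length 1 are loops, lists of length 2 are bidirectional edges. -/
def IsCycle {V : Type} (Adj : V → V → Prop) (c : List V) : Prop :=
  c ≠ [] ∧ c.Nodup ∧ c.Chain' Adj ∧ ∀ x ∈ c.getLast?, ∀ y ∈ c.head?, Adj x y

/-- The digraph `Adj` contains `k` pairwise vertex-disjoint directed cycles. -/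
def HasDisjointCycles {V : Type} (Adj : V → V → Prop) (k : ℕ) : Prop :=
  ∃ c : Fin k → List V, (∀ i, IsCycle Adj (c i)) ∧
    Pairwise fun i j => ∀ x, x ∈ c i → x ∉ c j

/-- A digraph is `r`-out if every vertex has out-degree at least `r`. -/
def IsROut {V : Type} (Adj : V → V → Prop) (r : ℕ) : Prop :=
  ∀ v, r ≤ {u | Adj v u}.ncard

/-- A digraph `Adj` on a finite nonempty vertex type `V` is `(k,r)`-critical if:
(1) it is `r`-out; (2) it does not contain `k+1` disjoint cycles;
(3) it has the smallest number of vertices subject to (1),(2);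
(4) the smallest number of edges subject to (1),(2),(3); and
(5) every `(r-2)`-out digraph contains `k` disjoint cycles. -/
def IsCritical (k r : ℕ) {V : Type} [Finite V] [Nonempty V] (Adj : V → V → Prop) : Prop :=
  IsROut Adj r ∧
  ¬ HasDisjointCycles Adj (k + 1) ∧
  (∀ (W : Type) [Finite W] [Nonempty W] (B : W → W → Prop),
    IsROut B r → ¬ HasDisjointCycles B (k + 1) → Nat.card V ≤ Nat.card W) ∧
  (∀ (W : Type) [Finite W] [Nonempty W] (B : W → W → Prop),
    IsROut B r → ¬ HasDisjointCycles B (k + 1) → Nat.card W = Nat.card V →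
      {p : V × V | Adj p.1 p.2}.ncard ≤ {p : W × W | B p.1 p.2}.ncard) ∧
  (∀ (W : Type) [Finite W] [Nonempty W] (B : W → W → Prop),
    IsROut B (r - 2) → HasDisjointCycles B k)

/-!
If an edge `uv` had no common parent, delete `u` and redirect every edge `x → u` to `x → v`.
No vertex loses out-degree, since no vertex points to both `u` and `v`. A cycle of the new
digraph either is already a cycle of the old one or becomes one after inserting `u` in front of
`v`, so disjoint cycles stay disjoint. This gives a smaller `r`-out digraph without `k + 1`
disjoint cycles, contradicting the minimality of the number of vertices.
-/

section Cycles

variable {α β : Type} {R S : α → α → Prop}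

theorem isCycle_cons_iff {a : α} {l : List α} :
    IsCycle R (a :: l) ↔ (a :: l).Nodup ∧ (a :: (l ++ [a])).IsChain R := by
  change _ ∧ _ ∧ List.IsChain R _ ∧ _ ↔ _
  rw [← List.cons_append, List.isChain_append]
  simp [and_assoc]

theorem isCycle_iff_cycleChain {l : List α} :
    IsCycle R l ↔ l ≠ [] ∧ l.Nodup ∧ Cycle.Chain R l := by
  cases l with
  | nil => simp [IsCycle]
  | cons a l => simp [isCycle_cons_iff, Cycle.chain_coe_cons]

theorem IsCycle.of_isRotated {l l' : List α} (h : IsCycle R l) (hl : l ~r l') :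
    IsCycle R l' := by
  rw [isCycle_iff_cycleChain] at h ⊢
  obtain ⟨hne, hnd, hch⟩ := h
  refine ⟨fun h' => hne (List.isRotated_nil_iff.mp (h' ▸ hl)), hl.nodup_iff.mp hnd, ?_⟩
  rwa [← Cycle.coe_eq_coe.mpr hl]

theorem IsCycle.exists_cons_isRotated {l : List α} {v : α} (h : IsCycle R l) (hv : v ∈ l) :
    ∃ w, IsCycle R (v :: w) ∧ v :: w ~r l := by
  obtain ⟨p, q, rfl⟩ := List.append_of_mem hv
  have hrot : v :: (q ++ p) ~r p ++ v :: q := by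
    simpa using (List.isRotated_append (l := p) (l' := v :: q)).symm
  exact ⟨q ++ p, h.of_isRotated hrot.symm, hrot⟩

theorem IsCycle.imp_of_mem {l : List α} (H : ∀ a b, a ∈ l → b ∈ l → R a b → S a b)
    (h : IsCycle R l) : IsCycle S l := by
  obtain ⟨hne, hnd, hch, hwrap⟩ := h
  refine ⟨hne, hnd, hch.imp_of_mem_imp H, fun x hx y hy => ?_⟩
  exact H x y (List.mem_of_getLast? hx) (List.mem_of_mem_head? hy) (hwrap x hx y hy)

theorem IsCycle.map {T : β → β → Prop} {f : α → β} (hf : Function.Injective f)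
    (H : ∀ a b, R a b → T (f a) (f b)) {l : List α} (h : IsCycle R l) :
    IsCycle T (l.map f) := by
  obtain ⟨hne, hnd, hch, hwrap⟩ := h
  refine ⟨by simpa using hne, hnd.map hf, (List.isChain_map f).mpr (hch.imp H), ?_⟩
  simp only [List.getLast?_map, List.head?_map, Option.mem_map]
  rintro _ ⟨x, hx, rfl⟩ _ ⟨y, hy, rfl⟩
  exact H x y (hwrap x hx y hy)

end Cycles

section Bypass

variable {V : Type} (Adj : V → V → Prop) (u v : V)

def bypass (x y : V) : Prop :=
  Adj x y ∨ (y = v ∧ Adj x u)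

def deleteBypass (x y : {x : V // x ≠ u}) : Prop :=
  bypass Adj u v x y

variable {Adj u v}

theorem isCycle_or_isCycle_cons_of_bypass {w : List V} (huv : Adj u v) (hu : u ∉ v :: w)
    (h : IsCycle (bypass Adj u v) (v :: w)) :
    IsCycle Adj (v :: w) ∨ IsCycle Adj (u :: v :: w) := by
  rw [isCycle_cons_iff, ← List.cons_append, List.isChain_append] at h
  obtain ⟨hnd, hch, -, hclose⟩ := h
  have hchAdj : (v :: w).IsChain Adj := by
    refine hch.imp_of_mem_tail_imp fun a b _ hb hab => hab.resolve_right fun hbv => ?_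
    exact (List.nodup_cons.mp hnd).1 (hbv.1 ▸ hb)
  by_cases hgenuine : ∀ x ∈ (v :: w).getLast?, Adj x v
  · left
    rw [isCycle_cons_iff, ← List.cons_append]
    exact ⟨hnd, hchAdj.append (.singleton v) fun x hx y hy => by simp_all⟩
  · right
    push Not at hgenuine
    obtain ⟨x, hx, hxv⟩ := hgenuine
    have hxu : Adj x u := ((hclose x hx v rfl).resolve_left hxv).2
    rw [isCycle_cons_iff, ← List.cons_append]
    refine ⟨List.nodup_cons.mpr ⟨hu, hnd⟩, List.isChain_cons_cons.mpr ⟨huv, ?_⟩⟩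
    refine hchAdj.append (.singleton u) fun y hy z hz => ?_
    rw [Option.mem_unique hy hx, Option.mem_unique hz rfl]
    exact hxu

theorem IsCycle.exists_lift_of_bypass {l : List V} (huv : Adj u v) (hu : u ∉ l)
    (h : IsCycle (bypass Adj u v) l) :
    ∃ l', IsCycle Adj l' ∧ ∀ x ∈ l', x ∈ l ∨ (x = u ∧ v ∈ l) := by
  by_cases hv : v ∈ l
  · obtain ⟨w, hw, hrot⟩ := h.exists_cons_isRotated hv
    rcases isCycle_or_isCycle_cons_of_bypass huv (hu ∘ hrot.mem_iff.mp) hw with h' | h'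
    · exact ⟨l, h'.of_isRotated hrot, fun x hx => Or.inl hx⟩
    · refine ⟨u :: v :: w, h', fun x hx => ?_⟩
      rcases List.mem_cons.mp hx with rfl | hx
      · exact Or.inr ⟨rfl, hv⟩
      · exact Or.inl (hrot.mem_iff.mp hx)
  · refine ⟨l, h.imp_of_mem fun a b _ hb hab => ?_, fun x hx => Or.inl hx⟩
    exact hab.resolve_right fun hbv => hv (hbv.1 ▸ hb)

theorem HasDisjointCycles.of_deleteBypass {n : ℕ} (huv : Adj u v)
    (h : HasDisjointCycles (deleteBypass Adj u v) n) : HasDisjointCycles Adj n := by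
  obtain ⟨c, hcyc, hdisj⟩ := h
  have hlift i : ∃ l', IsCycle Adj l' ∧
      ∀ x ∈ l', x ∈ (c i).map Subtype.val ∨ (x = u ∧ v ∈ (c i).map Subtype.val) :=
    ((hcyc i).map Subtype.val_injective fun _ _ h => h).exists_lift_of_bypass huv (by simp)
  choose L hL hLmem using hlift
  refine ⟨L, hL, fun i j hij x hxi hxj => ?_⟩
  obtain ⟨y, hyi, hyj⟩ : ∃ y, y ∈ (c i).map Subtype.val ∧ y ∈ (c j).map Subtype.val := by
    rcases hLmem i x hxi with hi | ⟨rfl, hvi⟩ <;> rcases hLmem j x hxj with hj | ⟨hxu, hvj⟩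
    · exact ⟨x, hi, hj⟩
    · simp [hxu] at hi
    · simp at hj
    · exact ⟨v, hvi, hvj⟩
  obtain ⟨a, ha, rfl⟩ := List.mem_map.mp hyi
  obtain ⟨b, hb, hba⟩ := List.mem_map.mp hyj
  exact hdisj hij a ha (Subtype.ext hba ▸ hb)

theorem IsROut.deleteBypass [Finite V] {r : ℕ} (h : IsROut Adj r) (hvu : v ≠ u)
    (hwit : ∀ w, Adj w u → ¬Adj w v) : IsROut (deleteBypass Adj u v) r := by
  classical
  intro x
  let f : V → {y : V // y ≠ u} := fun z => if hz : z = u then ⟨v, hvu⟩ else ⟨z, hz⟩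
  have hf z : (f z : V) = if z = u then v else z := by
    by_cases hz : z = u <;> simp [f, hz]
  refine (h x).trans (Set.ncard_le_ncard_of_injOn f (fun z hz => ?_) fun z₁ hz₁ z₂ hz₂ heq => ?_)
  · by_cases hzu : z = u
    · exact Or.inr ⟨by simp [hf, hzu], hzu ▸ hz⟩
    · exact Or.inl (by simpa [hf, hzu] using hz)
  · have hval := congrArg Subtype.val heq
    rw [hf, hf] at hval
    split_ifs at hval with h₁ h₂ h₂
    · exact h₁.trans h₂.symm
    · exact (hwit x (h₁ ▸ hz₁) (hval ▸ hz₂)).elim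
    · exact (hwit x (h₂ ▸ hz₂) (hval ▸ hz₁)).elim
    · exact hval

end Bypass

theorem critical_edge_has_witness_general (k r : ℕ)
    (V : Type) [Finite V] [Nonempty V] (Adj : V → V → Prop)
    (hc : IsCritical k r Adj) :
    ∀ u v, Adj u v → ∃ w, Adj w u ∧ Adj w v := by
  obtain ⟨hrout, hnocyc, hmin, -, -⟩ := hc
  intro u v huv
  by_contra! hwit
  have hvu : v ≠ u := fun h => hwit u (h ▸ huv) huv
  have : Nonempty {x : V // x ≠ u} := ⟨⟨v, hvu⟩⟩
  have hle := hmin _ (deleteBypass Adj u v) (hrout.deleteBypass hvu hwit)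
    fun h => hnocyc (h.of_deleteBypass huv)
  exact (Finite.card_subtype_lt (p := (· ≠ u)) (not_not.mpr rfl)).not_ge hle

/-- In a `(k,r)`-critical digraph every edge `uv` has a witness: a common
parent `w` of both `u` and `v`. -/
theorem critical_edge_has_witness (k r : ℕ) (hk : 0 < k) (hr : 0 < r)
    (V : Type) [Finite V] [Nonempty V] (Adj : V → V → Prop)
    (hc : IsCritical k r Adj) :
    ∀ u v, Adj u v → ∃ w, Adj w u ∧ Adj w v :=
  critical_edge_has_witness_general k r V Adj hc
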